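/- Let 𝓛 be a continuous nest on a complex separable Hilbert space H and let T be a nonzero finite rank bounded operator on H. Let M₁, M₂ ∈ 𝓛 be such that ω_T(M₁) and ω_T(M₂) are consecutive elements of the kernel set Ω_T, i.e., φ_T(M₁) ⊆ φ_T(M₂) and Ψ_T(M₁) ⊆ Ψ_T(M₂), ω_T(M₁) ≠ ω_T(M₂), and there is no M ∈ 𝓛 with ω_T(M) strictly between ω_T(M₁) and ω_T(M₂) in the componentwise inclusion order. Then Ψ_T(M₂) = σ_T(Ψ_T(M₁)). -/

import Mathlib

open scoped InnerProductSpace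

variable {H : Type*} [NormedAddCommGroup H] [InnerProductSpace ℂ H]
  [CompleteSpace H] [TopologicalSpace.SeparableSpace H]

/-- A subspace lattice on `H`: a set of closed subspaces containing `⊥` and `⊤`,
closed under arbitrary intersections and closed linear spans. -/
def IsSubspaceLattice (𝓛 : Set (Submodule ℂ H)) : Prop :=
  (∀ M ∈ 𝓛, IsClosed (M : Set H)) ∧ ⊥ ∈ 𝓛 ∧ ⊤ ∈ 𝓛 ∧
  (∀ S ⊆ 𝓛, sInf S ∈ 𝓛) ∧ (∀ S ⊆ 𝓛, (sSup S).topologicalClosure ∈ 𝓛)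

/-- A nest: a totally ordered subspace lattice. -/
def IsNest (𝓛 : Set (Submodule ℂ H)) : Prop :=
  IsSubspaceLattice 𝓛 ∧ ∀ M ∈ 𝓛, ∀ N ∈ 𝓛, M ≤ N ∨ N ≤ M

/-- A continuous nest. -/
def IsContinuousNest (𝓛 : Set (Submodule ℂ H)) : Prop :=
  IsNest 𝓛 ∧ ∀ M ∈ 𝓛, M = (sSup {N ∈ 𝓛 | N < M}).topologicalClosure

/-- `M_x`: the intersection of all members of `𝓛` containing `x`. -/
noncomputable def Mx (𝓛 : Set (Submodule ℂ H)) (x : H) : Submodule ℂ H :=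
  sInf {M ∈ 𝓛 | x ∈ M}

/-- `M̂_x`: the closed span of all members of `𝓛` orthogonal to `x`. -/
noncomputable def Mhat (𝓛 : Set (Submodule ℂ H)) (x : H) : Submodule ℂ H :=
  (sSup {M ∈ 𝓛 | ∀ v ∈ M, inner ℂ x v = (0 : ℂ)}).topologicalClosure

/-- `φ_T(M)`: the closed span of all members `M'` of `𝓛` with `T(M') ⊆ M`. -/
noncomputable def phiT (𝓛 : Set (Submodule ℂ H)) (T : H →L[ℂ] H) (M : Submodule ℂ H) :
    Submodule ℂ H :=
  (sSup {M' ∈ 𝓛 | ∀ v ∈ M', T v ∈ M}).topologicalClosure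

/-- `Ψ_T(M)`: the intersection of all `M' ∈ 𝓛` with `φ_T(M') = φ_T(M)`. -/
noncomputable def PsiT (𝓛 : Set (Submodule ℂ H)) (T : H →L[ℂ] H) (M : Submodule ℂ H) :
    Submodule ℂ H :=
  sInf {M' ∈ 𝓛 | phiT 𝓛 T M' = phiT 𝓛 T M}

/-- `σ_T(M)`: the closed span of all `M' ∈ 𝓛` with `φ_T(M') = φ_T(M)`. -/
noncomputable def sigmaT (𝓛 : Set (Submodule ℂ H)) (T : H →L[ℂ] H) (M : Submodule ℂ H) :
    Submodule ℂ H :=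
  (sSup {M' ∈ 𝓛 | phiT 𝓛 T M' = phiT 𝓛 T M}).topologicalClosure

/-- The kernel map `ω_T`. -/
noncomputable def omegaT (𝓛 : Set (Submodule ℂ H)) (T : H →L[ℂ] H) (M : Submodule ℂ H) :
    Submodule ℂ H × Submodule ℂ H :=
  (phiT 𝓛 T M, PsiT 𝓛 T M)

/-- The rank-one operator `x ⊗ y : z ↦ ⟨z, y⟩ x`. -/
noncomputable def rankOne (x y : H) : H →L[ℂ] H :=
  (innerSL ℂ y).smulRight x

/-- The nest algebra of a subspace lattice. -/
def nestAlg (𝓛 : Set (Submodule ℂ H)) : Set (H →L[ℂ] H) :=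
  {T | ∀ M ∈ 𝓛, ∀ v ∈ M, T v ∈ M}

/-- Lie module over the nest algebra. -/
def IsLieModule (𝓛 : Set (Submodule ℂ H)) (𝓜 : Submodule ℂ (H →L[ℂ] H)) : Prop :=
  ∀ A ∈ 𝓜, ∀ T ∈ nestAlg 𝓛, A.comp T - T.comp A ∈ 𝓜

/-- Orthogonal projection of a vector onto a closed subspace (junk value `0` if not closed). -/
noncomputable def projVec (N : Submodule ℂ H) (z : H) : H := by
  classical
  exact if h : IsClosed (N : Set H) then
    have : CompleteSpace N := h.completeSpace_coe
    (N.orthogonalProjection z : H)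
  else 0

/-!
Two kernel elements `ω(M₁) < ω(M₂)` have `φ(M₁) < φ(M₂)`, and total order of the nest forces every
`M'` with `φ(M') = φ(M₁)` below every `M''` with `φ(M'') = φ(M₂)`; hence `σ(M₁) ≤ Ψ(M₂)`. If the
inclusion were strict, continuity of the nest would give `N ∈ 𝓛` with `σ(M₁) < N < Ψ(M₂)`, and
`ω(N)` would lie strictly between `ω(M₁)` and `ω(M₂)`. Finally `σ(Ψ(M₁)) = σ(M₁)` because
`φ(Ψ(M)) = φ(M)` in a continuous nest.
-/

section KernelMap

omit [CompleteSpace H] [TopologicalSpace.SeparableSpace H]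

variable {𝓛 : Set (Submodule ℂ H)} (T : H →L[ℂ] H)

theorem IsSubspaceLattice.phiT_mem (h : IsSubspaceLattice 𝓛) (M : Submodule ℂ H) :
    phiT 𝓛 T M ∈ 𝓛 :=
  h.2.2.2.2 _ fun _ hM' => hM'.1

theorem IsSubspaceLattice.PsiT_mem (h : IsSubspaceLattice 𝓛) (M : Submodule ℂ H) :
    PsiT 𝓛 T M ∈ 𝓛 :=
  h.2.2.2.1 _ fun _ hM' => hM'.1

theorem IsSubspaceLattice.sigmaT_mem (h : IsSubspaceLattice 𝓛) (M : Submodule ℂ H) :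
    sigmaT 𝓛 T M ∈ 𝓛 :=
  h.2.2.2.2 _ fun _ hM' => hM'.1

theorem phiT_mono {M N : Submodule ℂ H} (hMN : M ≤ N) : phiT 𝓛 T M ≤ phiT 𝓛 T N :=
  Submodule.topologicalClosure_mono <|
    sSup_le_sSup fun _ hM' => ⟨hM'.1, fun v hv => hMN (hM'.2 v hv)⟩

theorem PsiT_le_self {M : Submodule ℂ H} (hM : M ∈ 𝓛) : PsiT 𝓛 T M ≤ M :=
  sInf_le ⟨hM, rfl⟩

theorem le_sigmaT_of_phiT_eq {M N : Submodule ℂ H} (hN : N ∈ 𝓛)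
    (h : phiT 𝓛 T N = phiT 𝓛 T M) : N ≤ sigmaT 𝓛 T M :=
  (le_sSup (s := {M' ∈ 𝓛 | phiT 𝓛 T M' = phiT 𝓛 T M}) ⟨hN, h⟩).trans
    (Submodule.le_topologicalClosure _)

theorem omegaT_eq_iff {M N : Submodule ℂ H} :
    omegaT 𝓛 T M = omegaT 𝓛 T N ↔ phiT 𝓛 T M = phiT 𝓛 T N :=
  ⟨congrArg Prod.fst, fun h => Prod.ext h (by simp only [omegaT, PsiT, h])⟩

theorem apply_mem_of_not_phiT_le (hn : IsNest 𝓛) {M N : Submodule ℂ H} (hN : N ∈ 𝓛)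
    (h : ¬ phiT 𝓛 T M ≤ N) {v : H} (hv : v ∈ N) : T v ∈ M := by
  obtain ⟨M', hM', hM'N⟩ : ∃ M' ∈ {M' ∈ 𝓛 | ∀ v ∈ M', T v ∈ M}, ¬ M' ≤ N := by
    by_contra! hall
    exact h (Submodule.topologicalClosure_minimal _ (sSup_le hall) (hn.1.1 N hN))
  exact hM'.2 v (((hn.2 M' hM'.1 N hN).resolve_left hM'N) hv)

theorem IsContinuousNest.exists_mem_lt_lt (hc : IsContinuousNest 𝓛) {A B : Submodule ℂ H}
    (hA : A ∈ 𝓛) (hB : B ∈ 𝓛) (hBA : ¬ B ≤ A) : ∃ N ∈ 𝓛, A < N ∧ N < B := by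
  obtain ⟨N, ⟨hN, hNB⟩, hNA⟩ : ∃ N ∈ {N ∈ 𝓛 | N < B}, ¬ N ≤ A := by
    by_contra! hall
    rw [hc.2 B hB] at hBA
    exact hBA (Submodule.topologicalClosure_minimal _ (sSup_le hall) (hc.1.1.1 A hA))
  exact ⟨N, hN, lt_of_le_not_ge ((hc.1.2 N hN A hA).resolve_left hNA) hNA, hNB⟩

theorem PsiT_mono (hn : IsNest 𝓛) {M N : Submodule ℂ H} (hM : M ∈ 𝓛) (hMN : M ≤ N) :
    PsiT 𝓛 T M ≤ PsiT 𝓛 T N := by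
  refine le_sInf fun M'' ⟨hM'', hphi⟩ => ?_
  rcases hn.2 M hM M'' hM'' with h | h
  · exact (PsiT_le_self T hM).trans h
  · exact sInf_le ⟨hM'', le_antisymm (phiT_mono T h) (hphi ▸ phiT_mono T hMN)⟩

/- Every `N < φ(M)` in `𝓛` satisfies `T(N) ⊆ M''` whenever `φ(M'') = φ(M)`, hence `T(N) ⊆ Ψ(M)`;
by continuity such `N` span `φ(M)`. -/
theorem phiT_PsiT (hc : IsContinuousNest 𝓛) {M : Submodule ℂ H} (hM : M ∈ 𝓛) :
    phiT 𝓛 T (PsiT 𝓛 T M) = phiT 𝓛 T M := by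
  refine le_antisymm (phiT_mono T (PsiT_le_self T hM)) ?_
  rw [hc.2 _ (hc.1.1.phiT_mem T M)]
  refine Submodule.topologicalClosure_mono (sSup_le_sSup fun N ⟨hN, hNlt⟩ => ⟨hN, fun v hv => ?_⟩)
  refine Submodule.mem_sInf.2 fun M'' ⟨hM'', hphi⟩ => ?_
  exact apply_mem_of_not_phiT_le T hc.1 hN (hphi ▸ hNlt.not_ge) hv

theorem sigmaT_PsiT (hc : IsContinuousNest 𝓛) {M : Submodule ℂ H} (hM : M ∈ 𝓛) :
    sigmaT 𝓛 T (PsiT 𝓛 T M) = sigmaT 𝓛 T M := by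
  simp only [sigmaT, phiT_PsiT T hc hM]

theorem sigmaT_le_PsiT (hn : IsNest 𝓛) {M₁ M₂ : Submodule ℂ H}
    (h : ¬ phiT 𝓛 T M₂ ≤ phiT 𝓛 T M₁) : sigmaT 𝓛 T M₁ ≤ PsiT 𝓛 T M₂ := by
  refine Submodule.topologicalClosure_minimal _ (sSup_le fun M' ⟨hM', hphi'⟩ => ?_)
    (hn.1.1 _ (hn.1.PsiT_mem T M₂))
  refine le_sInf fun M'' ⟨hM'', hphi''⟩ => ?_
  refine (hn.2 M' hM' M'' hM'').resolve_right fun hle => h ?_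
  rw [← hphi', ← hphi'']
  exact phiT_mono T hle

end KernelMap

theorem stmt_13_general (𝓛 : Set (Submodule ℂ H)) (h𝓛 : IsContinuousNest 𝓛)
    (T : H →L[ℂ] H)
    (M₁ M₂ : Submodule ℂ H) (h₁ : M₁ ∈ 𝓛) (h₂ : M₂ ∈ 𝓛)
    (hle : phiT 𝓛 T M₁ ≤ phiT 𝓛 T M₂ ∧ PsiT 𝓛 T M₁ ≤ PsiT 𝓛 T M₂)
    (hne : omegaT 𝓛 T M₁ ≠ omegaT 𝓛 T M₂)
    (hconsec : ¬ ∃ M ∈ 𝓛,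
        (phiT 𝓛 T M₁ ≤ phiT 𝓛 T M ∧ PsiT 𝓛 T M₁ ≤ PsiT 𝓛 T M) ∧
        (phiT 𝓛 T M ≤ phiT 𝓛 T M₂ ∧ PsiT 𝓛 T M ≤ PsiT 𝓛 T M₂) ∧
        omegaT 𝓛 T M ≠ omegaT 𝓛 T M₁ ∧ omegaT 𝓛 T M ≠ omegaT 𝓛 T M₂) :
    PsiT 𝓛 T M₂ = sigmaT 𝓛 T (PsiT 𝓛 T M₁) := by
  have hn := h𝓛.1
  have hphi : ¬ phiT 𝓛 T M₂ ≤ phiT 𝓛 T M₁ := fun h =>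
    hne ((omegaT_eq_iff T).2 (le_antisymm hle.1 h))
  rw [sigmaT_PsiT T h𝓛 h₁]
  refine le_antisymm ?_ (sigmaT_le_PsiT T hn hphi)
  by_contra hgap
  obtain ⟨N, hN, hσN, hNΨ⟩ :=
    h𝓛.exists_mem_lt_lt (hn.1.sigmaT_mem T M₁) (hn.1.PsiT_mem T M₂) hgap
  have hM₁N : M₁ ≤ N := (le_sigmaT_of_phiT_eq T h₁ rfl).trans hσN.le
  have hNM₂ : N ≤ M₂ := hNΨ.le.trans (PsiT_le_self T h₂)
  refine hconsec ⟨N, hN, ⟨phiT_mono T hM₁N, PsiT_mono T hn h₁ hM₁N⟩,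
    ⟨phiT_mono T hNM₂, PsiT_mono T hn hN hNM₂⟩, fun h => ?_, fun h => ?_⟩
  · exact hσN.not_ge (le_sigmaT_of_phiT_eq T hN ((omegaT_eq_iff T).1 h))
  · exact ((PsiT_le_self T hN).trans_lt hNΨ).ne (congrArg Prod.snd h)

theorem stmt_13 (𝓛 : Set (Submodule ℂ H)) (h𝓛 : IsContinuousNest 𝓛)
    (T : H →L[ℂ] H) (hT : T ≠ 0)
    (hfin : FiniteDimensional ℂ (LinearMap.range (T : H →ₗ[ℂ] H)))
    (M₁ M₂ : Submodule ℂ H) (h₁ : M₁ ∈ 𝓛) (h₂ : M₂ ∈ 𝓛)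
    (hle : phiT 𝓛 T M₁ ≤ phiT 𝓛 T M₂ ∧ PsiT 𝓛 T M₁ ≤ PsiT 𝓛 T M₂)
    (hne : omegaT 𝓛 T M₁ ≠ omegaT 𝓛 T M₂)
    (hconsec : ¬ ∃ M ∈ 𝓛,
        (phiT 𝓛 T M₁ ≤ phiT 𝓛 T M ∧ PsiT 𝓛 T M₁ ≤ PsiT 𝓛 T M) ∧
        (phiT 𝓛 T M ≤ phiT 𝓛 T M₂ ∧ PsiT 𝓛 T M ≤ PsiT 𝓛 T M₂) ∧
        omegaT 𝓛 T M ≠ omegaT 𝓛 T M₁ ∧ omegaT 𝓛 T M ≠ omegaT 𝓛 T M₂) :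
    PsiT 𝓛 T M₂ = sigmaT 𝓛 T (PsiT 𝓛 T M₁) :=
  stmt_13_general 𝓛 h𝓛 T M₁ M₂ h₁ h₂ hle hne hconsec
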